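/- arXiv:1411.1990 — 5 statements merged into one kernel-verified Lean document; each statement's English description precedes it below -/
import Mathlib

section
/- Let F : 2^{1..p} → ℝ be a set function. For every y ∈ ℝ^p, the supremum over all x in the unit ℓ∞-ball of x^T y − F(supp(x)) equals the maximum over binary vectors s ∈ {0,1}^p of |y|^T s − F(s), where |y| denotes the entrywise absolute value. -/
open Classical

/-- the supremum over the unit ℓ∞-ball of `xᵀy − F(supp x)` equals the
maximum over binary vectors (equivalently, supports `S ⊆ {1..p}`) of `|y|ᵀ s − F(s)`. -/
theorem stmt0 (p : ℕ) (F : Finset (Fin p) → ℝ) (y : Fin p → ℝ) :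
    ∃ m : ℝ,
      IsGreatest {v : ℝ | ∃ S : Finset (Fin p), v = (∑ i ∈ S, |y i|) - F S} m ∧
      sSup {v : ℝ | ∃ x : Fin p → ℝ, (∀ i, |x i| ≤ 1) ∧
        v = (∑ i, x i * y i) - F (Finset.univ.filter fun i => x i ≠ 0)} = m := by
  set g : Finset (Fin p) → ℝ := fun S => (∑ i ∈ S, |y i|) - F S with hg
  obtain ⟨S₀, hS₀⟩ := Finite.exists_max g
  refine ⟨g S₀, ⟨⟨S₀, rfl⟩, ?_⟩, ?_⟩
  · rintro v ⟨S, rfl⟩; exact hS₀ S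
  · have hach : g S₀ ∈ {v : ℝ | ∃ x : Fin p → ℝ, (∀ i, |x i| ≤ 1) ∧
        v = (∑ i, x i * y i) - F (Finset.univ.filter fun i => x i ≠ 0)} := by
      refine ⟨fun i => if i ∈ S₀ then (if y i < 0 then -1 else 1) else 0, ?_, ?_⟩
      · intro i; dsimp only; split_ifs <;> norm_num
      · have hsupp : (Finset.univ.filter fun i =>
            (if i ∈ S₀ then (if y i < 0 then (-1:ℝ) else 1) else 0) ≠ 0) = S₀ := by
          ext i
          simp only [Finset.mem_filter, Finset.mem_univ, true_and]
          split_ifs <;> simp_all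
        have hterm : ∀ i, (if i ∈ S₀ then (if y i < 0 then (-1:ℝ) else 1) else 0) * y i
            = if i ∈ S₀ then |y i| else 0 := by
          intro i
          split_ifs with h1 h2
          · rw [abs_of_neg h2]; ring
          · rw [abs_of_nonneg (not_lt.mp h2)]; ring
          · ring
        rw [hsupp]
        simp only [hg, hterm, Finset.sum_ite_mem, Finset.univ_inter]
    have hub : ∀ v ∈ {v : ℝ | ∃ x : Fin p → ℝ, (∀ i, |x i| ≤ 1) ∧
        v = (∑ i, x i * y i) - F (Finset.univ.filter fun i => x i ≠ 0)}, v ≤ g S₀ := by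
      rintro v ⟨x, hx, rfl⟩
      have heq : (∑ i, x i * y i)
          = ∑ i ∈ Finset.univ.filter (fun i => x i ≠ 0), x i * y i := by
        refine (Finset.sum_subset (Finset.filter_subset _ _) ?_).symm
        intro i _ hi
        simp only [Finset.mem_filter, Finset.mem_univ, true_and, not_not] at hi
        simp [hi]
      have hle : (∑ i ∈ Finset.univ.filter (fun i => x i ≠ 0), x i * y i)
          ≤ ∑ i ∈ Finset.univ.filter (fun i => x i ≠ 0), |y i| := by
        apply Finset.sum_le_sum
        intro i _
        calc x i * y i ≤ |x i * y i| := le_abs_self _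
          _ = |x i| * |y i| := abs_mul _ _
          _ ≤ 1 * |y i| := mul_le_mul_of_nonneg_right (hx i) (abs_nonneg _)
          _ = |y i| := one_mul _
      calc (∑ i, x i * y i) - F (Finset.univ.filter fun i => x i ≠ 0)
          ≤ (∑ i ∈ Finset.univ.filter (fun i => x i ≠ 0), |y i|)
            - F (Finset.univ.filter fun i => x i ≠ 0) := by
            rw [heq]; exact sub_le_sub_right hle _
        _ ≤ g S₀ := hS₀ _
    exact IsGreatest.csSup_eq ⟨hach, hub⟩
end

section
/- Every interval matrix is totally unimodular. That is, if B ∈ {0,1}^{l×m} has the property that in every row the entries equal to 1 appear in consecutive columns (i.e., for each row i there exist a_i ≤ b_i such that B_{ij} = 1 iff a_i ≤ j ≤ b_i), then every square submatrix of B has determinant 0, 1, or −1. -/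
/-- Auxiliary: a square 0-1 matrix whose ones are "convex" in each row has
determinant `0`, `1` or `-1`. -/
lemma interval_det : ∀ (k : ℕ) (M : Matrix (Fin k) (Fin k) ℝ),
    (∀ i j, M i j = 0 ∨ M i j = 1) →
    (∀ (i j1 j2 j3 : Fin k), j1 ≤ j2 → j2 ≤ j3 → M i j1 = 1 → M i j3 = 1 → M i j2 = 1) →
    M.det = 0 ∨ M.det = 1 ∨ M.det = -1 := by
  intro k
  induction k with
  | zero =>
    intro M _ _
    right; left
    exact Matrix.det_fin_zero
  | succ k ih =>
    intro M h01 hconv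
    by_cases hS : ∃ i, M i 0 = 1
    swap
    · left
      apply Matrix.det_eq_zero_of_column_eq_zero 0
      intro i
      rcases h01 i 0 with h | h
      · exact h
      · exact absurd ⟨i, h⟩ hS
    · -- the set of rows containing column 0
      set S : Finset (Fin (k+1)) := Finset.univ.filter (fun i => M i 0 = 1) with hSdef
      have hSne : S.Nonempty := by
        obtain ⟨i, hi⟩ := hS
        exact ⟨i, by simp [hSdef, hi]⟩
      -- the rightmost one in each row
      set e : Fin (k+1) → ℕ := fun i => (Finset.univ.filter (fun j => M i j = 1)).sup
        (fun j => (j : ℕ)) with hedef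
      have he_le : ∀ i j, M i j = 1 → (j : ℕ) ≤ e i := by
        intro i j hj
        exact Finset.le_sup (by simp [hj])
      have he_mem : ∀ i ∈ S, ∀ j : Fin (k+1), (j : ℕ) ≤ e i → M i j = 1 := by
        intro i hi j hj
        have hi0 : M i 0 = 1 := by simpa [hSdef] using hi
        have hne : (Finset.univ.filter (fun j => M i j = 1)).Nonempty :=
          ⟨0, by simp [hi0]⟩
        obtain ⟨jm, hjm, hjme⟩ := Finset.exists_mem_eq_sup _ hne (fun j : Fin (k+1) => (j : ℕ))
        have hjm1 : M i jm = 1 := by simpa using hjm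
        have hle : j ≤ jm := by
          have : (j : ℕ) ≤ (jm : ℕ) := by rw [← hjme]; exact hj
          exact this
        exact hconv i 0 j jm (Fin.zero_le j) hle hi0 hjm1
      obtain ⟨i0, hi0S, hi0min⟩ := Finset.exists_min_image S e hSne
      have hi00 : M i0 0 = 1 := by simpa [hSdef] using hi0S
      -- containment: ones of row i0 are ones of any row in S
      have hcont : ∀ i ∈ S, ∀ j, M i0 j = 1 → M i j = 1 := by
        intro i hi j hj
        exact he_mem i hi j (le_trans (he_le i0 j hj) (hi0min i hi))
      -- row reduction
      set c : Fin (k+1) → ℝ := fun i => if i ≠ i0 ∧ M i 0 = 1 then 1 else 0 with hcdef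
      set B' : Matrix (Fin (k+1)) (Fin (k+1)) ℝ := fun i j => M i j - c i * M i0 j with hB'def
      have hci0 : c i0 = 0 := by simp [hcdef]
      have hdet : M.det = B'.det := by
        apply Matrix.det_eq_of_forall_row_eq_smul_add_const c i0 hci0
        intro i j
        have h2 : B' i0 j = M i0 j := by simp [hB'def, hci0]
        rw [h2]
        show M i j = (M i j - c i * M i0 j) + c i * M i0 j
        ring
      -- description of rows of B'
      have hrow0 : ∀ i, ¬ (i ≠ i0 ∧ M i 0 = 1) → ∀ j, B' i j = M i j := by
        intro i hi j
        simp [hB'def, hcdef, hi]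
      have hrow1 : ∀ i, (i ≠ i0 ∧ M i 0 = 1) → ∀ j, B' i j = M i j - M i0 j := by
        intro i hi j
        simp [hB'def, hcdef, hi]
      have hiS : ∀ i, M i 0 = 1 → i ∈ S := by
        intro i hi; simp [hSdef, hi]
      -- B' is 0-1
      have hB01 : ∀ i j, B' i j = 0 ∨ B' i j = 1 := by
        intro i j
        by_cases hi : i ≠ i0 ∧ M i 0 = 1
        · rw [hrow1 i hi]
          rcases h01 i0 j with h0 | h1
          · rw [h0]; simpa using h01 i j
          · left
            rw [hcont i (hiS i hi.2) j h1, h1]; ring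
        · rw [hrow0 i hi]; exact h01 i j
      -- value-1 characterization for modified rows
      have hval1 : ∀ i, (i ≠ i0 ∧ M i 0 = 1) → ∀ j, B' i j = 1 ↔ (M i j = 1 ∧ M i0 j = 0) := by
        intro i hi j
        rw [hrow1 i hi]
        constructor
        · intro h
          rcases h01 i j with h1 | h1 <;> rcases h01 i0 j with h2 | h2 <;>
            rw [h1, h2] at h <;> norm_num at h <;> exact ⟨h1, h2⟩
        · rintro ⟨h1, h2⟩
          rw [h1, h2]; ring
      -- B' is convex in rows
      have hB'conv : ∀ (i j1 j2 j3 : Fin (k+1)), j1 ≤ j2 → j2 ≤ j3 →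
          B' i j1 = 1 → B' i j3 = 1 → B' i j2 = 1 := by
        intro i j1 j2 j3 h12 h23 ha hb
        by_cases hi : i ≠ i0 ∧ M i 0 = 1
        · rw [hval1 i hi] at ha hb ⊢
          obtain ⟨ha1, ha2⟩ := ha
          obtain ⟨hb1, hb2⟩ := hb
          refine ⟨hconv i j1 j2 j3 h12 h23 ha1 hb1, ?_⟩
          rcases h01 i0 j2 with h | h
          · exact h
          · exfalso
            have : M i0 j1 = 1 := hconv i0 0 j1 j2 (Fin.zero_le _) h12 hi00 h
            rw [this] at ha2; norm_num at ha2
        · rw [hrow0 i hi] at ha hb ⊢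
          exact hconv i j1 j2 j3 h12 h23 ha hb
      -- column 0 of B'
      have hcol0 : ∀ i, B' i 0 = if i = i0 then 1 else 0 := by
        intro i
        by_cases hii : i = i0
        · subst hii
          rw [hrow0 i (by simp), hi00, if_pos rfl]
        · rw [if_neg hii]
          by_cases hi1 : M i 0 = 1
          · rw [hrow1 i ⟨hii, hi1⟩, hi1, hi00]; ring
          · rw [hrow0 i (by tauto)]
            rcases h01 i 0 with h | h
            · exact h
            · exact absurd h hi1
      -- cofactor expansion
      rw [hdet, Matrix.det_succ_column_zero]
      rw [Finset.sum_eq_single i0]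
      · have hN01 : ∀ i j, (B'.submatrix i0.succAbove Fin.succ) i j = 0 ∨
            (B'.submatrix i0.succAbove Fin.succ) i j = 1 := fun i j => hB01 _ _
        have hNconv : ∀ (i j1 j2 j3 : Fin k), j1 ≤ j2 → j2 ≤ j3 →
            (B'.submatrix i0.succAbove Fin.succ) i j1 = 1 →
            (B'.submatrix i0.succAbove Fin.succ) i j3 = 1 →
            (B'.submatrix i0.succAbove Fin.succ) i j2 = 1 := by
          intro i j1 j2 j3 h12 h23 ha hb
          exact hB'conv _ _ _ _ (Fin.succ_le_succ_iff.mpr h12) (Fin.succ_le_succ_iff.mpr h23) ha hb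
        rcases ih _ hN01 hNconv with h | h | h <;>
          rcases neg_one_pow_eq_or ℝ (i0 : ℕ) with hp | hp <;>
          rw [hcol0 i0, if_pos rfl, h, hp] <;> norm_num
      · intro i _ hii
        rw [hcol0 i, if_neg hii]
        ring
      · intro h
        exact absurd (Finset.mem_univ i0) h

/-- every interval matrix (a 0-1 matrix whose ones occur consecutively in
each row) is totally unimodular. -/
theorem stmt3 (l m : ℕ) (B : Matrix (Fin l) (Fin m) ℝ)
    (hB : ∀ i, ∃ a b : ℕ, a ≤ b ∧
      ∀ j : Fin m, B i j = if a ≤ (j : ℕ) ∧ (j : ℕ) ≤ b then 1 else 0) :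
    B.IsTotallyUnimodular := by
  intro k f g hf hg
  -- sort the columns
  set D : Finset (Fin m) := Finset.image g Finset.univ with hDdef
  have hcard : D.card = k := by
    rw [hDdef, Finset.card_image_of_injective _ hg, Finset.card_univ, Fintype.card_fin]
  set φ := D.orderIsoOfFin hcard with hφdef
  set g' : Fin k → Fin m := fun j => (φ j : Fin m) with hg'def
  have hg'mono : Monotone g' := by
    intro a b hab
    exact Subtype.coe_le_coe.mpr (φ.monotone hab)
  have hgD : ∀ j, g j ∈ D := by
    intro j
    exact Finset.mem_image_of_mem g (Finset.mem_univ j)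
  set σ : Fin k → Fin k := fun j => φ.symm ⟨g j, hgD j⟩ with hσdef
  have hg'σ : ∀ j, g' (σ j) = g j := by
    intro j
    simp [hg'def, hσdef]
  have hσinj : Function.Injective σ := by
    intro a b hab
    apply hg
    rw [← hg'σ a, ← hg'σ b, hab]
  have hσbij : Function.Bijective σ := Finite.injective_iff_bijective.mp hσinj
  set perm : Equiv.Perm (Fin k) := Equiv.ofBijective σ hσbij with hpermdef
  have hsub : B.submatrix f g = (B.submatrix f g').submatrix id perm := by
    ext i j
    simp only [Matrix.submatrix_apply, id_eq, hpermdef, Equiv.ofBijective_apply]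
    rw [hg'σ j]
  -- the sorted submatrix is a 0-1 convex matrix
  have h01 : ∀ i j, (B.submatrix f g') i j = 0 ∨ (B.submatrix f g') i j = 1 := by
    intro i j
    obtain ⟨a, b, _, hab⟩ := hB (f i)
    rw [Matrix.submatrix_apply, hab]
    split <;> simp
  have hconv : ∀ (i : Fin k) (j1 j2 j3 : Fin k), j1 ≤ j2 → j2 ≤ j3 →
      (B.submatrix f g') i j1 = 1 → (B.submatrix f g') i j3 = 1 →
      (B.submatrix f g') i j2 = 1 := by
    intro i j1 j2 j3 h12 h23 h1 h3
    obtain ⟨a, b, _, hab⟩ := hB (f i)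
    rw [Matrix.submatrix_apply, hab] at h1 h3 ⊢
    have hc1 : a ≤ ((g' j1 : Fin m) : ℕ) ∧ ((g' j1 : Fin m) : ℕ) ≤ b := by
      by_contra hc
      rw [if_neg hc] at h1; norm_num at h1
    have hc3 : a ≤ ((g' j3 : Fin m) : ℕ) ∧ ((g' j3 : Fin m) : ℕ) ≤ b := by
      by_contra hc
      rw [if_neg hc] at h3; norm_num at h3
    have hm12 : ((g' j1 : Fin m) : ℕ) ≤ ((g' j2 : Fin m) : ℕ) := hg'mono h12
    have hm23 : ((g' j2 : Fin m) : ℕ) ≤ ((g' j3 : Fin m) : ℕ) := hg'mono h23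
    rw [if_pos ⟨le_trans hc1.1 hm12, le_trans hm23 hc3.2⟩]
  have hdet := interval_det k (B.submatrix f g') h01 hconv
  have hmem : ∀ x : ℝ, x = 0 ∨ x = 1 ∨ x = -1 →
      x ∈ Set.range (SignType.cast : SignType → ℝ) := by
    rintro x (rfl | rfl | rfl)
    · exact ⟨0, by norm_num⟩
    · exact ⟨1, by norm_num⟩
    · exact ⟨-1, by norm_num⟩
  rw [hsub, Matrix.det_permute' perm (B.submatrix f g')]
  apply hmem
  rcases Int.units_eq_one_or (Equiv.Perm.sign perm) with hs | hs <;> rw [hs] <;>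
    rcases hdet with h | h | h <;> rw [h] <;> norm_num
end

section
/- Let T be a rooted finite tree on vertex set {1,…,p} and x ∈ [−1,1]^p. The optimal value of the LP: minimize Σ_{i=1}^p s_i over s ∈ [0,1]^p subject to s_{parent(i)} ≥ s_i for every non-root vertex i, and s_i ≥ |x_i| for every i, equals Σ_{i=1}^p max_{k ∈ Desc(i)} |x_k|, where Desc(i) denotes the set consisting of i and all its descendants in T. -/
open Classical

/-- hierarchical (rooted tree) model: the LP `min Σ s_i` over `s ∈ [0,1]^p`
with `s_{parent(i)} ≥ s_i` for non-root `i` and `s ≥ |x|`, for `x ∈ [−1,1]^p`, has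
optimal value `Σ_i max_{k ∈ Desc(i)} |x_k|`, where `Desc(i)` is `i` together with its
descendants (all `k` with `parent^[n] k = i` for some `n`). -/
theorem stmt13 (p : ℕ) (root : Fin p) (parent : Fin p → Fin p)
    (hroot : parent root = root)
    (htree : ∀ i : Fin p, ∃ n : ℕ, parent^[n] i = root)
    (x : Fin p → ℝ) (hx : ∀ i, |x i| ≤ 1) :
    IsLeast {v : ℝ | ∃ s : Fin p → ℝ, (∀ i, s i ∈ Set.Icc (0:ℝ) 1) ∧
        (∀ i, i ≠ root → s i ≤ s (parent i)) ∧ (∀ i, |x i| ≤ s i) ∧ v = ∑ i, s i}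
      (∑ i, ⨆ k ∈ {k : Fin p | ∃ n : ℕ, parent^[n] k = i}, |x k|) := by
  set f : Fin p → Fin p → ℝ :=
    fun i k => ⨆ _ : k ∈ {k : Fin p | ∃ n : ℕ, parent^[n] k = i}, |x k| with hf
  set t : Fin p → ℝ := fun i => ⨆ k, f i k with ht
  have hfle : ∀ i k, f i k ≤ 1 := fun i k =>
    Real.iSup_le (fun _ => hx k) zero_le_one
  have hfnn : ∀ i k, 0 ≤ f i k := fun i k =>
    Real.iSup_nonneg (fun _ => abs_nonneg _)
  have htnn : ∀ i, 0 ≤ t i := fun i => Real.iSup_nonneg (hfnn i)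
  have htle : ∀ i, t i ≤ 1 := fun i => Real.iSup_le (hfle i) zero_le_one
  have hbdd : ∀ i, BddAbove (Set.range (f i)) := fun i =>
    ⟨1, by rintro _ ⟨k, rfl⟩; exact hfle i k⟩
  have hmem : ∀ i k, (∃ n : ℕ, parent^[n] k = i) → |x k| ≤ t i := by
    intro i k h
    have : f i k = |x k| := ciSup_pos h
    calc |x k| = f i k := this.symm
      _ ≤ t i := le_ciSup (hbdd i) k
  constructor
  · refine ⟨t, fun i => ⟨htnn i, htle i⟩, ?_, fun i => hmem i i ⟨0, rfl⟩, rfl⟩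
    intro i _
    refine Real.iSup_le (fun k => Real.iSup_le (fun h => ?_) (htnn _)) (htnn _)
    obtain ⟨n, hn⟩ := h
    exact hmem (parent i) k ⟨n + 1, by rw [Function.iterate_succ_apply', hn]⟩
  · rintro v ⟨s, hs01, hmono, hsx, rfl⟩
    have hchain : ∀ n (k i : Fin p), parent^[n] k = i → s k ≤ s i := by
      intro n
      induction n with
      | zero => intro k i h; exact le_of_eq (congrArg s h)
      | succ n ih =>
        intro k i h
        by_cases hk : k = root
        · have hfix : ∀ m, parent^[m] root = root := by
            intro m; induction m with
            | zero => rfl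
            | succ m ihm => rw [Function.iterate_succ_apply', ihm, hroot]
          rw [hk, hfix (n+1)] at h
          rw [hk, h]
        · exact (hmono k hk).trans (ih (parent k) i (by
            rwa [Function.iterate_succ_apply] at h))
    refine Finset.sum_le_sum (fun i _ => ?_)
    refine Real.iSup_le (fun k => Real.iSup_le (fun h => ?_) (hs01 i).1) (hs01 i).1
    obtain ⟨n, hn⟩ := h
    exact (hsx k).trans (hchain n k i hn)
end

section
/- Let F : 2^{1..p} → ℝ and define g(x) = F(supp(x)) for ‖x‖∞ ≤ 1 and g(x) = +∞ otherwise. Suppose f : [0,1]^p → ℝ is a proper l.s.c. convex function with f(s) = F(supp(s)) for all s ∈ {0,1}^p, and suppose that for every y ∈ ℝ^p, max_{s ∈ {0,1}^p} (|y|^T s − f(s)) = max_{s ∈ [0,1]^p} (|y|^T s − f(s)). Then the Fenchel biconjugate of g satisfies g**(x) = min{ f(s) : s ∈ [0,1]^p, s ≥ |x| } for every x ∈ [−1,1]^p. -/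
open Classical

/-- The Fenchel conjugate of an extended-real-valued function on `ℝ^p`. -/
noncomputable def fenchelConj (p : ℕ) (g : (Fin p → ℝ) → EReal) : (Fin p → ℝ) → EReal :=
  fun y => ⨆ x : Fin p → ℝ, ((∑ i, x i * y i : ℝ) : EReal) - g x

/-- A lower semicontinuous function on a compact set is bounded below. -/
lemma lsc_bddBelow {X : Type*} [TopologicalSpace X] {K : Set X} (hK : IsCompact K)
    {f : X → ℝ} (hf : LowerSemicontinuousOn f K) : ∃ B : ℝ, ∀ z ∈ K, B ≤ f z := by
  have hU : ∀ s ∈ K, {z : X | z ∈ K → f s - 1 < f z} ∈ nhds s := by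
    intro s hs
    have h1 := hf s hs (f s - 1) (by linarith)
    rw [eventually_nhdsWithin_iff] at h1
    exact h1
  obtain ⟨t, hcov⟩ := hK.elim_nhds_subcover' (fun s _ => {z : X | z ∈ K → f s - 1 < f z})
    (fun s hs => hU s hs)
  classical
  rcases t.eq_empty_or_nonempty with hte | htne
  · refine ⟨0, fun z hz => ?_⟩
    have := hcov hz
    simp [hte] at this
  · obtain ⟨B, hB⟩ : ∃ B, ∀ s ∈ t, B ≤ f s.1 - 1 :=
      ⟨t.inf' htne (fun s => f s.1 - 1), fun s hs => Finset.inf'_le _ hs⟩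
    refine ⟨B, fun z hz => ?_⟩
    obtain ⟨s, hst, hsz⟩ := Set.mem_iUnion₂.1 (hcov hz)
    exact le_trans (hB s hst) (le_of_lt (hsz hz))

lemma integral_finite (p : ℕ) : {s : Fin p → ℝ | ∀ i, s i = 0 ∨ s i = 1}.Finite := by
  have : {s : Fin p → ℝ | ∀ i, s i = 0 ∨ s i = 1} ⊆ Set.pi Set.univ (fun _ => ({0, 1} : Set ℝ)) := by
    intro s hs i _
    rcases hs i with h | h <;> simp [h]
  exact Set.Finite.subset (Set.Finite.pi (fun _ => (Set.finite_singleton 1).insert 0)) this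

/-- Computation of the Fenchel conjugate of `g`. -/
lemma conj_formula (p : ℕ) (F : Finset (Fin p) → ℝ) (f : (Fin p → ℝ) → ℝ)
    (hagree : ∀ s : Fin p → ℝ, (∀ i, s i = 0 ∨ s i = 1) →
      f s = F (Finset.univ.filter fun i => s i ≠ 0))
    (g : (Fin p → ℝ) → EReal)
    (hg : ∀ x : Fin p → ℝ, g x =
      if ∀ i, |x i| ≤ 1 then ((F (Finset.univ.filter fun i => x i ≠ 0) : ℝ) : EReal) else ⊤)
    (y : Fin p → ℝ) :
    fenchelConj p g y =
      ((sSup {v : ℝ | ∃ s : Fin p → ℝ, (∀ i, s i = 0 ∨ s i = 1) ∧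
          v = (∑ i, |y i| * s i) - f s} : ℝ) : EReal) := by
  set Sint : Set ℝ := {v : ℝ | ∃ s : Fin p → ℝ, (∀ i, s i = 0 ∨ s i = 1) ∧
      v = (∑ i, |y i| * s i) - f s} with hSint
  have hfin : Sint.Finite := by
    have : Sint ⊆ (fun s => (∑ i, |y i| * s i) - f s) '' {s : Fin p → ℝ | ∀ i, s i = 0 ∨ s i = 1} := by
      rintro v ⟨s, hs, rfl⟩
      exact ⟨s, hs, rfl⟩
    exact Set.Finite.subset ((integral_finite p).image _) this
  have hne : Sint.Nonempty := ⟨(∑ i, |y i| * 0) - f (fun _ => 0), (fun _ => 0), fun _ => Or.inl rfl, rfl⟩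
  apply le_antisymm
  · refine iSup_le fun z => ?_
    by_cases hz : ∀ i, |z i| ≤ 1
    · rw [hg z, if_pos hz, ← EReal.coe_sub, EReal.coe_le_coe_iff]
      set χ : Fin p → ℝ := fun i => if z i = 0 then 0 else 1 with hχ
      have hχint : ∀ i, χ i = 0 ∨ χ i = 1 := by
        intro i; by_cases h : z i = 0 <;> simp [hχ, h]
      have hfilter : (Finset.univ.filter fun i => χ i ≠ 0) = (Finset.univ.filter fun i => z i ≠ 0) := by
        apply Finset.filter_congr; intro i _
        by_cases h : z i = 0 <;> simp [hχ, h]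
      have hmem : (∑ i, |y i| * χ i) - f χ ∈ Sint := ⟨χ, hχint, rfl⟩
      have hle : (∑ i, |y i| * χ i) - f χ ≤ sSup Sint := le_csSup hfin.bddAbove hmem
      have hsum : (∑ i, z i * y i) ≤ ∑ i, |y i| * χ i := by
        apply Finset.sum_le_sum; intro i _
        by_cases h : z i = 0
        · simp [hχ, h]
        · have : z i * y i ≤ |z i| * |y i| := by
            calc z i * y i ≤ |z i * y i| := le_abs_self _
            _ = |z i| * |y i| := abs_mul _ _
          have h1 : |z i| * |y i| ≤ 1 * |y i| :=
            mul_le_mul_of_nonneg_right (hz i) (abs_nonneg _)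
          simp only [hχ, if_neg h]
          calc z i * y i ≤ |z i| * |y i| := this
          _ ≤ 1 * |y i| := h1
          _ = |y i| * 1 := by ring
      have : f χ = F (Finset.univ.filter fun i => z i ≠ 0) := by
        rw [hagree χ hχint, hfilter]
      linarith [hle, hsum, this ▸ hle]
    · rw [hg z, if_neg hz, EReal.sub_top]
      exact bot_le
  · obtain ⟨s₀, hs₀int, hs₀⟩ := Set.Nonempty.csSup_mem hne hfin
    set z : Fin p → ℝ := fun i => if y i < 0 then -(s₀ i) else s₀ i with hzdef
    have hzball : ∀ i, |z i| ≤ 1 := by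
      intro i
      have : |z i| = |s₀ i| := by by_cases h : y i < 0 <;> simp [hzdef, h]
      rw [this]
      rcases hs₀int i with h | h <;> simp [h]
    have hzfilter : (Finset.univ.filter fun i => z i ≠ 0) = (Finset.univ.filter fun i => s₀ i ≠ 0) := by
      apply Finset.filter_congr; intro i _
      by_cases h : y i < 0 <;> simp [hzdef, h]
    have hzsum : (∑ i, z i * y i) = ∑ i, |y i| * s₀ i := by
      apply Finset.sum_congr rfl; intro i _
      by_cases h : y i < 0
      · simp only [hzdef, if_pos h, abs_of_neg h]; ring
      · simp only [hzdef, if_neg h, abs_of_nonneg (not_lt.1 h)]; ring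
    have hterm : ((∑ i, z i * y i : ℝ) : EReal) - g z = ((sSup Sint : ℝ) : EReal) := by
      rw [hg z, if_pos hzball, ← EReal.coe_sub, EReal.coe_eq_coe_iff, hzsum, hzfilter,
        ← hagree s₀ hs₀int, hs₀]
    calc ((sSup Sint : ℝ) : EReal) = ((∑ i, z i * y i : ℝ) : EReal) - g z := hterm.symm
    _ ≤ _ := le_iSup (fun x => ((∑ i, x i * y i : ℝ) : EReal) - g x) z

/-- The separation (strong duality) step. -/
lemma sep_step (p : ℕ) (f : (Fin p → ℝ) → ℝ)
    (hconv : ConvexOn ℝ (Set.Icc (0 : Fin p → ℝ) 1) f)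
    (hlsc : LowerSemicontinuousOn f (Set.Icc (0 : Fin p → ℝ) 1))
    (x : Fin p → ℝ) (hx : ∀ i, |x i| ≤ 1) (r : ℝ)
    (hr : ∀ s ∈ Set.Icc (0 : Fin p → ℝ) 1, (∀ i, |x i| ≤ s i) → r < f s) :
    ∃ w : Fin p → ℝ, (∀ i, 0 ≤ w i) ∧
      ∀ s ∈ Set.Icc (0 : Fin p → ℝ) 1, r < (∑ i, (|x i| - s i) * w i) + f s := by
  set box := Set.Icc (0 : Fin p → ℝ) 1 with hbox
  have hone : (1 : Fin p → ℝ) ∈ box := ⟨zero_le_one, le_refl _⟩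
  -- the convex closed set C
  set C : Set ((Fin p → ℝ) × ℝ) :=
    {q | ∃ s ∈ box, (∀ i, |x i| - s i ≤ q.1 i) ∧ f s ≤ q.2} with hC
  have hCconv : Convex ℝ C := by
    rintro q₁ ⟨s₁, hs₁, hq₁, hf₁⟩ q₂ ⟨s₂, hs₂, hq₂, hf₂⟩ a b ha hb hab
    refine ⟨a • s₁ + b • s₂, (convex_Icc _ _) hs₁ hs₂ ha hb hab, ?_, ?_⟩
    · intro i
      have h1 := mul_le_mul_of_nonneg_left (hq₁ i) ha
      have h2 := mul_le_mul_of_nonneg_left (hq₂ i) hb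
      have : |x i| = a * |x i| + b * |x i| := by rw [← add_mul, hab, one_mul]
      simp only [Prod.fst_add, Prod.smul_fst, Pi.add_apply, Pi.smul_apply, smul_eq_mul]
      nlinarith [h1, h2]
    · have h3 := hconv.2 hs₁ hs₂ ha hb hab
      simp only [Prod.snd_add, Prod.smul_snd, smul_eq_mul] at *
      nlinarith [mul_le_mul_of_nonneg_left hf₁ ha, mul_le_mul_of_nonneg_left hf₂ hb]
  have hCclosed : IsClosed C := by
    refine IsSeqClosed.isClosed ?_
    rintro q q₀ hq hlim
    choose sn hsbox hscoord hsf using hq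
    obtain ⟨s, hsmem, φ, hφ, hsconv⟩ := (isCompact_Icc).tendsto_subseq hsbox
    have hqφ : Filter.Tendsto (fun n => q (φ n)) Filter.atTop (nhds q₀) :=
      hlim.comp hφ.tendsto_atTop
    refine ⟨s, hsmem, ?_, ?_⟩
    · intro i
      have h1 : Filter.Tendsto (fun n => (sn (φ n)) i) Filter.atTop (nhds (s i)) := by
        exact (continuous_apply i).continuousAt.tendsto.comp hsconv
      have h2 : Filter.Tendsto (fun n => (q (φ n)).1 i) Filter.atTop (nhds (q₀.1 i)) :=
        ((continuous_apply i).comp continuous_fst).continuousAt.tendsto.comp hqφ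
      have h3 : Filter.Tendsto (fun n => |x i| - (sn (φ n)) i) Filter.atTop (nhds (|x i| - s i)) :=
        tendsto_const_nhds.sub h1
      exact le_of_tendsto_of_tendsto' h3 h2 (fun n => hscoord (φ n) i)
    · by_contra hcon
      push_neg at hcon
      set r' := (q₀.2 + f s) / 2 with hr'
      have h1 : Filter.Tendsto (fun n => sn (φ n)) Filter.atTop (nhdsWithin s box) := by
        refine tendsto_nhdsWithin_of_tendsto_nhds_of_eventually_within _ hsconv
          (Filter.Eventually.of_forall fun n => hsbox (φ n))
      have h2 := hlsc s hsmem r' (by rw [hr']; linarith)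
      have h3 : ∀ᶠ n in Filter.atTop, r' < f (sn (φ n)) := h1.eventually h2
      have h4 : Filter.Tendsto (fun n => (q (φ n)).2) Filter.atTop (nhds q₀.2) :=
        (continuous_snd).continuousAt.tendsto.comp hqφ
      have h5 : r' ≤ q₀.2 := by
        refine ge_of_tendsto h4 ?_
        filter_upwards [h3] with n hn
        exact le_trans (le_of_lt hn) (hsf (φ n))
      rw [hr'] at h5; linarith
  have hnotin : ((0 : Fin p → ℝ), r) ∉ C := by
    rintro ⟨s, hsbox', hcoord, hfs⟩
    have : ∀ i, |x i| ≤ s i := fun i => by have := hcoord i; simpa using this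
    exact absurd hfs (not_le.2 (hr s hsbox' this))
  obtain ⟨ψ, u, hu, hsep⟩ := geometric_hahn_banach_point_closed hCconv hCclosed hnotin
  set w : Fin p → ℝ := fun i => ψ (Pi.single i 1, 0) with hw
  set α : ℝ := ψ ((0 : Fin p → ℝ), 1) with hα
  have hdecomp : ∀ q : (Fin p → ℝ) × ℝ, ψ q = (∑ i, q.1 i * w i) + q.2 * α := by
    intro q
    have hq : q = (∑ i, q.1 i • ((Pi.single i 1 : Fin p → ℝ), (0 : ℝ))) + q.2 • ((0 : Fin p → ℝ), 1) := by
      apply Prod.ext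
      · simp only [Prod.fst_add, Prod.fst_sum, Prod.smul_fst, Prod.smul_snd, smul_eq_mul]
        funext j
        simp only [Pi.add_apply, Finset.sum_apply, Pi.smul_apply, smul_eq_mul, Pi.mul_apply]
        rw [Finset.sum_eq_single j]
        · simp
        · intro i _ hij
          rw [Pi.single_apply]
          simp [Ne.symm hij]
        · simp
      · simp only [Prod.snd_add, Prod.snd_sum, Prod.smul_snd, smul_eq_mul]
        simp
    calc ψ q = ψ ((∑ i, q.1 i • ((Pi.single i 1 : Fin p → ℝ), (0 : ℝ))) + q.2 • ((0 : Fin p → ℝ), 1)) := by rw [← hq]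
    _ = (∑ i, q.1 i * ψ ((Pi.single i 1 : Fin p → ℝ), (0 : ℝ))) + q.2 * ψ ((0 : Fin p → ℝ), 1) := by
        rw [map_add, map_sum, map_smul, smul_eq_mul]
        congr 1
        apply Finset.sum_congr rfl
        intro i _
        rw [map_smul, smul_eq_mul]
    _ = _ := rfl
  -- the point (0, f 1) is in C
  have hmem1 : ∀ t : ℝ, f 1 ≤ t → ((0 : Fin p → ℝ), t) ∈ C := by
    intro t ht
    exact ⟨1, hone, fun i => by simpa using sub_nonpos.2 (hx i), ht⟩
  have hf1r : r < f 1 := hr 1 hone (fun i => hx i)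
  have hψ1 : ∀ t : ℝ, f 1 ≤ t → u < t * α := by
    intro t ht
    have := hsep _ (hmem1 t ht)
    rwa [hdecomp, Finset.sum_eq_zero (fun i _ => by simp), zero_add] at this
  have hψ0 : r * α < u := by
    have := hu
    rwa [hdecomp, Finset.sum_eq_zero (fun i _ => by simp), zero_add] at this
  have hαpos : 0 < α := by
    by_contra hneg
    push_neg at hneg
    rcases lt_or_eq_of_le hneg with hneg | heq
    · -- α < 0 : take t large
      have h1 := hψ1 (max (f 1) ((u - 1) / α)) (le_max_left _ _)
      have h2 : max (f 1) ((u - 1) / α) * α ≤ u - 1 := by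
        have := le_max_right (f 1) ((u - 1) / α)
        calc max (f 1) ((u - 1) / α) * α ≤ ((u - 1) / α) * α :=
          mul_le_mul_of_nonpos_right this (le_of_lt hneg)
        _ = u - 1 := div_mul_cancel₀ _ (ne_of_lt hneg)
      linarith
    · -- α = 0
      have h1 := hψ1 (f 1) le_rfl
      have h2 := hψ0
      rw [heq, mul_zero] at h1 h2
      linarith
  have hwpos : ∀ i, 0 ≤ w i := by
    intro i
    by_contra hneg
    push_neg at hneg
    set M := max 0 ((u - 1 - f 1 * α) / w i) with hM
    have hMnn : 0 ≤ M := le_max_left _ _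
    have hmemM : ((Pi.single i M : Fin p → ℝ), f 1) ∈ C := by
      refine ⟨1, hone, fun j => ?_, le_rfl⟩
      by_cases hj : j = i
      · subst hj
        simp only [Pi.single_eq_same, Pi.one_apply]
        have := hx j
        linarith
      · have h0 : (Pi.single i M : Fin p → ℝ) j = 0 := by
          rw [Pi.single_apply, if_neg hj]
        simp only [h0]
        have := hx j
        simp only [Pi.one_apply]
        linarith
    have h1 := hsep _ hmemM
    rw [hdecomp] at h1
    have h2 : (∑ j, (Pi.single i M : Fin p → ℝ) j * w j) = M * w i := by
      rw [Finset.sum_eq_single i]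
      · simp
      · intro j _ hj
        rw [Pi.single_eq_of_ne hj]
        simp
      · simp
    rw [h2] at h1
    have h3 : M * w i ≤ u - 1 - f 1 * α := by
      have hMge : (u - 1 - f 1 * α) / w i ≤ M := le_max_right _ _
      calc M * w i ≤ ((u - 1 - f 1 * α) / w i) * w i :=
        mul_le_mul_of_nonpos_right hMge (le_of_lt hneg)
      _ = u - 1 - f 1 * α := div_mul_cancel₀ _ (ne_of_lt hneg)
    simp only [Prod.fst, Prod.snd] at h1
    linarith
  refine ⟨fun i => w i / α, fun i => div_nonneg (hwpos i) (le_of_lt hαpos), ?_⟩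
  intro s hsbox'
  have hmems : ((fun i => |x i| - s i), f s) ∈ C := ⟨s, hsbox', fun i => le_rfl, le_rfl⟩
  have h1 := hsep _ hmems
  rw [hdecomp] at h1
  simp only [Prod.fst, Prod.snd] at h1
  have h2 : r * α < (∑ i, (|x i| - s i) * w i) + f s * α := lt_trans hψ0 h1
  have h3 : ∀ i, (|x i| - s i) * w i = ((|x i| - s i) * (w i / α)) * α := by
    intro i; field_simp
  rw [Finset.sum_congr rfl (fun i _ => h3 i), ← Finset.sum_mul] at h2
  have h4 : r < (∑ i, (|x i| - s i) * (w i / α)) + f s := by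
    nlinarith [h2, hαpos]
  exact h4


/-- if `f` is a proper l.s.c. convex extension of `F ∘ supp` on `[0,1]^p`
for which the conjugate maximization has integral optima, then the Fenchel biconjugate of
`g = F ∘ supp + indicator of the unit ℓ∞-ball` is `x ↦ min {f(s) : s ∈ [0,1]^p, s ≥ |x|}`
on `[−1,1]^p`. -/
theorem stmt16 (p : ℕ) (F : Finset (Fin p) → ℝ) (f : (Fin p → ℝ) → ℝ)
    (hconv : ConvexOn ℝ (Set.Icc (0 : Fin p → ℝ) 1) f)
    (hlsc : LowerSemicontinuousOn f (Set.Icc (0 : Fin p → ℝ) 1))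
    (hagree : ∀ s : Fin p → ℝ, (∀ i, s i = 0 ∨ s i = 1) →
      f s = F (Finset.univ.filter fun i => s i ≠ 0))
    (hint : ∀ y : Fin p → ℝ,
      sSup {v : ℝ | ∃ s : Fin p → ℝ, (∀ i, s i = 0 ∨ s i = 1) ∧
          v = (∑ i, |y i| * s i) - f s} =
      sSup {v : ℝ | ∃ s ∈ Set.Icc (0 : Fin p → ℝ) 1, v = (∑ i, |y i| * s i) - f s})
    (g : (Fin p → ℝ) → EReal)
    (hg : ∀ x : Fin p → ℝ, g x =
      if ∀ i, |x i| ≤ 1 then ((F (Finset.univ.filter fun i => x i ≠ 0) : ℝ) : EReal) else ⊤)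
    (x : Fin p → ℝ) (hx : ∀ i, |x i| ≤ 1) :
    fenchelConj p (fenchelConj p g) x =
      ((sInf {v : ℝ | ∃ s ∈ Set.Icc (0 : Fin p → ℝ) 1, (∀ i, |x i| ≤ s i) ∧ v = f s} : ℝ)
        : EReal) := by
  classical
  obtain ⟨B, hB⟩ := lsc_bddBelow isCompact_Icc hlsc
  set Sint : (Fin p → ℝ) → Set ℝ := fun y => {v : ℝ | ∃ s : Fin p → ℝ, (∀ i, s i = 0 ∨ s i = 1) ∧
      v = (∑ i, |y i| * s i) - f s} with hSintdef
  have hIB : ∀ s : Fin p → ℝ, (∀ i, s i = 0 ∨ s i = 1) → s ∈ Set.Icc (0 : Fin p → ℝ) 1 := by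
    intro s hs
    refine ⟨fun i => ?_, fun i => ?_⟩ <;> rcases hs i with h | h <;> simp [h]
  have hSfin : ∀ y, (Sint y).Finite := by
    intro y
    have : Sint y ⊆ (fun s => (∑ i, |y i| * s i) - f s) '' {s : Fin p → ℝ | ∀ i, s i = 0 ∨ s i = 1} := by
      rintro v ⟨s, hs, rfl⟩
      exact ⟨s, hs, rfl⟩
    exact Set.Finite.subset ((integral_finite p).image _) this
  have hSne : ∀ y, (Sint y).Nonempty := fun y =>
    ⟨(∑ i, |y i| * 0) - f (fun _ => 0), (fun _ => 0), fun _ => Or.inl rfl, rfl⟩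
  set T : Set ℝ := {v : ℝ | ∃ s ∈ Set.Icc (0 : Fin p → ℝ) 1, (∀ i, |x i| ≤ s i) ∧ v = f s} with hT
  have hTne : T.Nonempty := by
    refine ⟨f (fun i => |x i|), (fun i => |x i|), ⟨fun i => abs_nonneg _, fun i => hx i⟩,
      fun i => le_rfl, rfl⟩
  have hTbdd : BddBelow T := by
    refine ⟨B, ?_⟩
    rintro v ⟨s, hs, _, rfl⟩
    exact hB s hs
  -- rewrite the double conjugate
  have main : fenchelConj p (fenchelConj p g) x =
      ⨆ y : Fin p → ℝ, (((∑ i, y i * x i) - sSup (Sint y) : ℝ) : EReal) := by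
    show (⨆ y : Fin p → ℝ, ((∑ i, y i * x i : ℝ) : EReal) - fenchelConj p g y) = _
    refine iSup_congr fun y => ?_
    rw [conj_formula p F f hagree g hg y, ← EReal.coe_sub]
  rw [main]
  apply le_antisymm
  · refine iSup_le fun y => ?_
    rw [EReal.coe_le_coe_iff]
    refine le_csInf hTne ?_
    rintro v ⟨s, hs, hxs, rfl⟩
    have hbddBox : ∀ v ∈ {v : ℝ | ∃ s ∈ Set.Icc (0 : Fin p → ℝ) 1, v = (∑ i, |y i| * s i) - f s},
        v ≤ (∑ i, |y i|) - B := by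
      rintro v ⟨s', hs', rfl⟩
      have h1 : (∑ i, |y i| * s' i) ≤ ∑ i, |y i| := by
        refine Finset.sum_le_sum fun i _ => ?_
        calc |y i| * s' i ≤ |y i| * 1 := mul_le_mul_of_nonneg_left (hs'.2 i) (abs_nonneg _)
        _ = |y i| := mul_one _
      have h2 := hB s' hs'
      linarith
    have hmem : (∑ i, |y i| * s i) - f s ∈
        {v : ℝ | ∃ s ∈ Set.Icc (0 : Fin p → ℝ) 1, v = (∑ i, |y i| * s i) - f s} := ⟨s, hs, rfl⟩
    have hle : (∑ i, |y i| * s i) - f s ≤ sSup (Sint y) := by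
      rw [hint y]
      exact le_csSup ⟨_, hbddBox⟩ hmem
    have hsum : (∑ i, y i * x i) ≤ ∑ i, |y i| * s i := by
      refine Finset.sum_le_sum fun i _ => ?_
      calc y i * x i ≤ |y i * x i| := le_abs_self _
      _ = |y i| * |x i| := abs_mul _ _
      _ ≤ |y i| * s i := mul_le_mul_of_nonneg_left (hxs i) (abs_nonneg _)
    linarith
  · refine le_of_forall_lt fun c hc => ?_
    obtain ⟨r, hcr, hrm⟩ := EReal.exists_between_coe_real hc
    have hrm' : r < sInf T := EReal.coe_lt_coe_iff.1 hrm
    have hr' : ∀ s ∈ Set.Icc (0 : Fin p → ℝ) 1, (∀ i, |x i| ≤ s i) → r < f s := by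
      intro s hs hge
      exact lt_of_lt_of_le hrm' (csInf_le hTbdd ⟨s, hs, hge, rfl⟩)
    obtain ⟨w, hw, hkey⟩ := sep_step p f hconv hlsc x hx r hr'
    set y : Fin p → ℝ := fun i => if x i < 0 then -(w i) else w i with hy
    have hyabs : ∀ i, |y i| = w i := by
      intro i
      by_cases h : x i < 0 <;> simp [hy, h, abs_of_nonneg (hw i)]
    have hyx : (∑ i, y i * x i) = ∑ i, |x i| * w i := by
      refine Finset.sum_congr rfl fun i _ => ?_
      by_cases h : x i < 0
      · simp only [hy, if_pos h, abs_of_neg h]; ring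
      · simp only [hy, if_neg h, abs_of_nonneg (not_lt.1 h)]; ring
    obtain ⟨s₀, hs₀int, hs₀⟩ := Set.Nonempty.csSup_mem (hSne y) (hSfin y)
    have hs₀box := hIB s₀ hs₀int
    have hkey₀ := hkey s₀ hs₀box
    have hsplit : (∑ i, (|x i| - s₀ i) * w i) = (∑ i, |x i| * w i) - ∑ i, |y i| * s₀ i := by
      rw [← Finset.sum_sub_distrib]
      refine Finset.sum_congr rfl fun i _ => ?_
      rw [hyabs i]; ring
    have hrle : r ≤ (∑ i, y i * x i) - sSup (Sint y) := by
      rw [hs₀, hyx]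
      rw [hsplit] at hkey₀
      linarith
    calc c < (r : EReal) := hcr
    _ ≤ (((∑ i, y i * x i) - sSup (Sint y) : ℝ) : EReal) := EReal.coe_le_coe_iff.2 hrle
    _ ≤ _ := le_iSup (fun y => (((∑ i, y i * x i) - sSup (Sint y) : ℝ) : EReal)) y
end

section
/- For x ∈ [−1,1]^p, groups 𝔊 = {G_1,…,G_M} with bipartite edge set ℰ = {(i,j) : j ∈ G_i}, the optimal value of the LP: minimize Σ_{(i,j)∈ℰ} z_{ij} over ω ∈ [0,1]^M, s ∈ [0,1]^p, z ∈ [0,1]^{ℰ}, subject to s_j ≤ ω_i for all (i,j) ∈ ℰ, z_{ij} ≥ ω_i + s_j − 1 for all (i,j) ∈ ℰ, and s ≥ |x|, equals Σ_{(i,j)∈ℰ} max(‖x_{G_i}‖∞ + |x_j| − 1, 0), where ‖x_{G_i}‖∞ = max_{k ∈ G_i} |x_k|. -/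
open Classical

lemma aux_bdd (p : ℕ) (G : Finset (Fin p)) (x : Fin p → ℝ) (hx : ∀ j, |x j| ≤ 1) :
    BddAbove (Set.range fun k => ⨆ _ : k ∈ G, |x k|) := by
  refine ⟨1, ?_⟩
  rintro y ⟨k, rfl⟩
  exact Real.iSup_le (fun _ => hx k) zero_le_one

/-- the convex surrogate for the group intersection model with sparsity
within groups: the LP `min Σ_{(i,j): j ∈ G_i} z_{ij}` over `ω ∈ [0,1]^M, s ∈ [0,1]^p,
z ∈ [0,1]^ℰ` with `s_j ≤ ω_i`, `z_{ij} ≥ ω_i + s_j − 1` (for `j ∈ G_i`) and `s ≥ |x|`,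
for `x ∈ [−1,1]^p`, has optimal value `Σ_{(i,j): j ∈ G_i} (‖x_{G_i}‖_∞ + |x_j| − 1)₊`. -/
theorem stmt19 (p M : ℕ) (G : Fin M → Finset (Fin p))
    (x : Fin p → ℝ) (hx : ∀ j, |x j| ≤ 1) :
    IsLeast {v : ℝ | ∃ (ω : Fin M → ℝ) (s : Fin p → ℝ) (z : Fin M × Fin p → ℝ),
        (∀ i, ω i ∈ Set.Icc (0:ℝ) 1) ∧ (∀ j, s j ∈ Set.Icc (0:ℝ) 1) ∧
        (∀ i, ∀ j ∈ G i, z (i, j) ∈ Set.Icc (0:ℝ) 1) ∧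
        (∀ i, ∀ j ∈ G i, s j ≤ ω i) ∧
        (∀ i, ∀ j ∈ G i, ω i + s j - 1 ≤ z (i, j)) ∧
        (∀ j, |x j| ≤ s j) ∧
        v = ∑ i, ∑ j ∈ G i, z (i, j)}
      (∑ i, ∑ j ∈ G i, max ((⨆ k ∈ G i, |x k|) + |x j| - 1) 0) := by
  set A : Fin M → ℝ := fun i => ⨆ k ∈ G i, |x k| with hA
  have hA0 : ∀ i, 0 ≤ A i := fun i =>
    Real.iSup_nonneg (fun k => Real.iSup_nonneg (fun _ => abs_nonneg _))
  have hA1 : ∀ i, A i ≤ 1 := fun i =>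
    Real.iSup_le (fun k => Real.iSup_le (fun _ => hx k) zero_le_one) zero_le_one
  have hAle : ∀ i, ∀ j ∈ G i, |x j| ≤ A i := by
    intro i j hj
    refine le_ciSup_of_le (aux_bdd p (G i) x hx) j ?_
    exact le_ciSup (f := fun _ : j ∈ G i => |x j|) ⟨|x j|, by rintro y ⟨_, rfl⟩; rfl⟩ hj
  constructor
  · refine ⟨A, fun j => |x j|, fun q => max (A q.1 + |x q.2| - 1) 0, ?_, ?_, ?_, ?_, ?_, ?_, rfl⟩
    · exact fun i => ⟨hA0 i, hA1 i⟩
    · exact fun j => ⟨abs_nonneg _, hx j⟩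
    · intro i j hj
      refine ⟨le_max_right _ _, max_le (by have := hA1 i; have := hx j; linarith) zero_le_one⟩
    · exact hAle
    · exact fun i j hj => le_max_left _ _
    · exact fun j => le_rfl
  · rintro v ⟨ω, s, z, hω, hs, hz, hsω, hzc, hxs, rfl⟩
    refine Finset.sum_le_sum fun i _ => Finset.sum_le_sum fun j hj => ?_
    have h1 : A i ≤ ω i :=
      Real.iSup_le (fun k => Real.iSup_le (fun hk => (hxs k).trans (hsω i k hk)) (hω i).1) (hω i).1
    have h2 := hzc i j hj
    have h3 := hxs j
    exact max_le (by linarith) (hz i j hj).1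
end
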